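/- arXiv:1604.02492 — 6 statements merged into one kernel-verified Lean document; each statement's English description precedes it below -/
import Mathlib

section
/- Fix m ≥ 1 and a query function f : 𝔽₂^m × 𝔽₂ → [0,1]. For an affine function ℓ on 𝔽₂^m, let T(ℓ) = 2^{-m} · Σ_{y ∈ 𝔽₂^m} f(y, ℓ(y)) be the true answer under hypothesis ℓ, and let P = 2^{-m-1} · Σ_{y ∈ 𝔽₂^m} Σ_{z ∈ 𝔽₂} f(y, z) be the prior mean answer. If ℓ is chosen uniformly at random among all 2^{m+1} affine functions on 𝔽₂^m, then for every ε > 0, the probability that |T(ℓ) − P| ≥ ε is at most 2^{-m}/(4ε²). -/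
/-!
Split `f (y, z) = (f (y, 0) + f (y, 1)) / 2 + (-1)^z g y` with `g y = (f (y, 0) - f (y, 1)) / 2`.
Then `T ℓ - P = 2^{-m} ∑_y (-1)^{ℓ y} g y`, and since the functions `ℓ ↦ (-1)^{ℓ y}` are
orthogonal over the `2^{m+1}` affine `ℓ`, the sum of `(T ℓ - P)^2` over all `ℓ` equals
`2^{1-m} ∑_y g y ^ 2 ≤ 1/2` (as `|g| ≤ 1/2`). Chebyshev's inequality concludes.
-/

open Finset

namespace ZMod

lemma eq_zero_or_eq_one (z : ZMod 2) : z = 0 ∨ z = 1 := by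
  revert z; decide

def signChar : AddChar (ZMod 2) ℝ where
  toFun z := (-1) ^ z.val
  map_zero_eq_one' := by simp
  map_add_eq_mul' a b := by rw [← pow_add, ZMod.val_add, ← neg_one_pow_eq_pow_mod_two]

@[simp] lemma signChar_one : signChar 1 = -1 := by simp [signChar, ZMod.val_one]

lemma signChar_eq_one_iff {z : ZMod 2} : signChar z = 1 ↔ z = 0 := by
  rcases z.eq_zero_or_eq_one with rfl | rfl <;> norm_num

variable {ι : Type*} [Fintype ι] [DecidableEq ι]

lemma sum_signChar_dotProduct (w : ι → ZMod 2) :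
    ∑ b : ι → ZMod 2, signChar (b ⬝ᵥ w) = if w = 0 then 2 ^ Fintype.card ι else 0 := by
  let ψ : AddChar (ι → ZMod 2) ℝ :=
    signChar.compAddMonoidHom (AddMonoidHom.mk' (· ⬝ᵥ w) fun a b ↦ add_dotProduct a b w)
  have hψ : ψ = 0 ↔ w = 0 := by
    simp only [AddChar.eq_zero_iff, ψ, AddChar.compAddMonoidHom_apply, AddMonoidHom.mk'_apply,
      signChar_eq_one_iff, dotProduct_comm _ w, dotProduct_eq_zero_iff]
  change ∑ b, ψ b = _
  simp [AddChar.sum_eq_ite, hψ]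

lemma sum_signChar_affine_mul (y y' : ι → ZMod 2) :
    ∑ ab : ZMod 2 × (ι → ZMod 2), signChar (ab.1 + ab.2 ⬝ᵥ y) * signChar (ab.1 + ab.2 ⬝ᵥ y') =
      if y = y' then 2 ^ (Fintype.card ι + 1) else 0 := by
  have key : ∀ (a : ZMod 2) (b : ι → ZMod 2),
      signChar (a + b ⬝ᵥ y) * signChar (a + b ⬝ᵥ y') = signChar (b ⬝ᵥ (y + y')) := by
    intro a b
    rw [← AddChar.map_add_eq_mul, dotProduct_add]
    congr 1
    linear_combination (CharTwo.add_self_eq_zero a)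
  have hyy : y + y' = 0 ↔ y = y' := by
    simp only [funext_iff, Pi.add_apply, Pi.zero_apply, CharTwo.add_eq_zero]
  simp only [Fintype.sum_prod_type, key, sum_signChar_dotProduct, hyy, sum_const, card_univ,
    ZMod.card]
  split_ifs <;> simp [pow_succ, mul_comm]

lemma sum_sq_sum_signChar_affine_mul (g : (ι → ZMod 2) → ℝ) :
    ∑ ab : ZMod 2 × (ι → ZMod 2), (∑ y, signChar (ab.1 + ab.2 ⬝ᵥ y) * g y) ^ 2 =
      2 ^ (Fintype.card ι + 1) * ∑ y, g y ^ 2 := by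
  calc ∑ ab : ZMod 2 × (ι → ZMod 2), (∑ y, signChar (ab.1 + ab.2 ⬝ᵥ y) * g y) ^ 2
      = ∑ y, ∑ y', g y * g y' * ∑ ab : ZMod 2 × (ι → ZMod 2),
          signChar (ab.1 + ab.2 ⬝ᵥ y) * signChar (ab.1 + ab.2 ⬝ᵥ y') := by
        simp only [sq, sum_mul_sum]
        simp only [mul_sum]
        rw [sum_comm]
        refine sum_congr rfl fun y _ ↦ ?_
        rw [sum_comm]
        refine sum_congr rfl fun y' _ ↦ sum_congr rfl fun ab _ ↦ by ring
    _ = 2 ^ (Fintype.card ι + 1) * ∑ y, g y ^ 2 := by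
        simp [sum_signChar_affine_mul, mul_sum, sq, mul_comm]

end ZMod

open ZMod

lemma sum_apply_sub_half_sum_eq_sum_signChar_mul {Y : Type*} [Fintype Y]
    (f : Y × ZMod 2 → ℝ) (F : Y → ZMod 2) :
    ∑ y, f (y, F y) - (∑ y, ∑ z, f (y, z)) / 2 =
      ∑ y, signChar (F y) * ((f (y, 0) - f (y, 1)) / 2) := by
  have hsplit (y : Y) (z : ZMod 2) :
      f (y, z) = (f (y, 0) + f (y, 1)) / 2 + signChar z * ((f (y, 0) - f (y, 1)) / 2) := by
    rcases z.eq_zero_or_eq_one with rfl | rfl <;> norm_num <;> ring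
  have hpair (y : Y) : ∑ z, f (y, z) = f (y, 0) + f (y, 1) := Fin.sum_univ_two _
  rw [sum_div, ← sum_sub_distrib]
  refine sum_congr rfl fun y _ ↦ ?_
  rw [hpair, hsplit y (F y)]
  ring

lemma Finset.card_filter_le_abs_mul_sq_le_sum_sq {α : Type*} (s : Finset α) (u : α → ℝ)
    {ε : ℝ} (hε : 0 ≤ ε) : #{x ∈ s | ε ≤ |u x|} * ε ^ 2 ≤ ∑ x ∈ s, u x ^ 2 :=
  calc #{x ∈ s | ε ≤ |u x|} * ε ^ 2 = ∑ x ∈ s with ε ≤ |u x|, ε ^ 2 := by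
        rw [sum_const, nsmul_eq_mul]
    _ ≤ ∑ x ∈ s with ε ≤ |u x|, u x ^ 2 := sum_le_sum fun x hx ↦ by
        simpa only [sq_abs] using pow_le_pow_left₀ hε (mem_filter.1 hx).2 2
    _ ≤ ∑ x ∈ s, u x ^ 2 :=
        sum_le_sum_of_subset_of_nonneg (filter_subset _ _) fun _ _ _ ↦ sq_nonneg _

lemma sum_sq_half_sub_le_card_div_four {Y : Type*} [Fintype Y] (f : Y × ZMod 2 → ℝ)
    (hf : ∀ x, 0 ≤ f x ∧ f x ≤ 1) :
    ∑ y, ((f (y, 0) - f (y, 1)) / 2) ^ 2 ≤ (Fintype.card Y : ℝ) / 4 :=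
  calc ∑ y, ((f (y, 0) - f (y, 1)) / 2) ^ 2 ≤ ∑ _ : Y, (1 / 4 : ℝ) :=
        sum_le_sum fun y _ ↦ by nlinarith [hf (y, 0), hf (y, 1)]
    _ = Fintype.card Y / 4 := by simp [div_eq_mul_inv]

theorem stmt_0_general (m : ℕ) (f : (Fin m → ZMod 2) × ZMod 2 → ℝ)
    (hf : ∀ x, 0 ≤ f x ∧ f x ≤ 1)
    (T : (ZMod 2 × (Fin m → ZMod 2)) → ℝ)
    (hT : ∀ ab, T ab = (2 : ℝ) ^ (-(m : ℤ)) *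
      ∑ y : Fin m → ZMod 2, f (y, ab.1 + ∑ i, ab.2 i * y i))
    (P : ℝ)
    (hP : P = (2 : ℝ) ^ (-(m : ℤ) - 1) *
      ∑ y : Fin m → ZMod 2, ∑ z : ZMod 2, f (y, z))
    (ε : ℝ) (hε : 0 < ε) :
    ((Finset.univ.filter
        (fun ab : ZMod 2 × (Fin m → ZMod 2) => ε ≤ |T ab - P|)).card : ℝ) /
      2 ^ (m + 1) ≤ (2 : ℝ) ^ (-(m : ℤ)) / (4 * ε ^ 2) := by
  set g : (Fin m → ZMod 2) → ℝ := fun y ↦ (f (y, 0) - f (y, 1)) / 2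
  have hTP (ab : ZMod 2 × (Fin m → ZMod 2)) :
      T ab - P = 2 ^ (-(m : ℤ)) * ∑ y, signChar (ab.1 + ab.2 ⬝ᵥ y) * g y := by
    rw [hT, hP, ← sum_apply_sub_half_sum_eq_sum_signChar_mul, zpow_sub_one₀ two_ne_zero]
    simp only [dotProduct]
    ring
  have hvar : ∑ ab, (T ab - P) ^ 2 ≤ 1 / 2 := by
    simp only [hTP, mul_pow, ← mul_sum, sum_sq_sum_signChar_affine_mul, Fintype.card_fin]
    calc ((2 : ℝ) ^ (-(m : ℤ))) ^ 2 * (2 ^ (m + 1) * ∑ y, g y ^ 2)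
        ≤ ((2 : ℝ) ^ (-(m : ℤ))) ^ 2 * (2 ^ (m + 1) * (2 ^ m / 4)) := by
          gcongr; simpa using sum_sq_half_sub_le_card_div_four f hf
      _ = 1 / 2 := by rw [zpow_neg, zpow_natCast]; field_simp; ring
  have hcheb := (card_filter_le_abs_mul_sq_le_sum_sq univ (fun ab ↦ T ab - P) hε.le).trans hvar
  rw [div_le_div_iff₀ (by positivity) (by positivity), zpow_neg, zpow_natCast, pow_succ (2 : ℝ) m,
    inv_mul_cancel_left₀ (by positivity)]
  linarith

/-- Prior-mean concentration for the linear classification model `LC_m` (Lemma 6):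
if `ℓ` is a uniformly random affine function on `𝔽₂^m`, the true answer `T ℓ`
deviates from the prior mean `P` by at least `ε` with probability at most
`2^{-m} / (4 ε²)`. -/
theorem stmt_0 (m : ℕ) (hm : 1 ≤ m) (f : (Fin m → ZMod 2) × ZMod 2 → ℝ)
    (hf : ∀ x, 0 ≤ f x ∧ f x ≤ 1)
    (T : (ZMod 2 × (Fin m → ZMod 2)) → ℝ)
    (hT : ∀ ab, T ab = (2 : ℝ) ^ (-(m : ℤ)) *
      ∑ y : Fin m → ZMod 2, f (y, ab.1 + ∑ i, ab.2 i * y i))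
    (P : ℝ)
    (hP : P = (2 : ℝ) ^ (-(m : ℤ) - 1) *
      ∑ y : Fin m → ZMod 2, ∑ z : ZMod 2, f (y, z))
    (ε : ℝ) (hε : 0 < ε) :
    ((Finset.univ.filter
        (fun ab : ZMod 2 × (Fin m → ZMod 2) => ε ≤ |T ab - P|)).card : ℝ) /
      2 ^ (m + 1) ≤ (2 : ℝ) ^ (-(m : ℤ)) / (4 * ε ^ 2) :=
  stmt_0_general m f hf T hT P hP ε hε
end

section
/- Let μ be a Borel probability measure on ℝ with μ([0,1]) = 1 and with no atoms. Then there exists a point x ∈ (0,1) such that for every η > 0, both μ([x−η, x]) ≤ 2η and μ([x, x+η]) ≤ 2η. -/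
/-
Let `F` be the distribution function of `μ`, continuous since `μ` has no atoms, and
`G t = 2 t - F t`. The two bounds at `x` say `G (x - η) ≤ G x ≤ G (x + η)`, so `x` fails only if
it lies in the left shadow `U = {x | ∃ y < x, G x < G y}` or the right shadow
`V = {x | ∃ y > x, G y < G x}` of `G`. By Riesz's rising sun lemma every component `(a, b)` of the
open set `U` (or `V`) has `G b ≤ G a`, i.e. `2 (b - a) ≤ μ (a, b)`; summing over the components
gives `2 λ U ≤ μ U` and `2 λ V ≤ μ V`. If `U ∪ V ⊇ (0, 1)`, then
`2 + 2 λ (U ∩ V) ≤ μ U + μ V ≤ 1 + μ (U ∩ V) ≤ 2`, so the open set `U ∩ V` is Lebesgue-null,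
hence empty, and then `2 ≤ 1`.
-/

open MeasureTheory Set ProbabilityTheory
open scoped ENNReal

theorem measure_le_of_forall_connectedComponentIn_le {α : Type*} [TopologicalSpace α]
    [LocallyConnectedSpace α] [TopologicalSpace.SeparableSpace α] [MeasurableSpace α]
    [OpensMeasurableSpace α] {μ ν : Measure α} {W : Set α} (hW : IsOpen W)
    (h : ∀ x ∈ W, ν (connectedComponentIn W x) ≤ μ (connectedComponentIn W x)) :
    ν W ≤ μ W := by
  set S := connectedComponentIn W '' W
  have hdisj : S.PairwiseDisjoint id := by
    rintro _ ⟨x, -, rfl⟩ _ ⟨y, -, rfl⟩ hne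
    refine Set.disjoint_left.2 fun z hzx hzy => hne ?_
    rw [connectedComponentIn_eq hzx, connectedComponentIn_eq hzy]
  have hopen : ∀ s ∈ S, IsOpen s := by
    rintro _ ⟨x, -, rfl⟩
    exact hW.connectedComponentIn
  have hcount : S.Countable :=
    hdisj.countable_of_isOpen hopen fun _ ⟨x, hx, hs⟩ => hs ▸ ⟨x, mem_connectedComponentIn hx⟩
  have hW_eq : W = ⋃₀ S := by
    refine (sUnion_subset ?_).antisymm' fun x hx =>
      ⟨_, mem_image_of_mem _ hx, mem_connectedComponentIn hx⟩
    rintro _ ⟨x, -, rfl⟩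
    exact connectedComponentIn_subset W x
  have hmeas : ∀ s ∈ S, MeasurableSet s := fun s hs => (hopen s hs).measurableSet
  rw [hW_eq, measure_sUnion hcount hdisj hmeas, measure_sUnion hcount hdisj hmeas]
  exact ENNReal.tsum_le_tsum fun ⟨_, x, hx, hs⟩ => hs ▸ h x hx

theorem exists_connectedComponentIn_eq_Ioo {W : Set ℝ} (hW : IsOpen W)
    (hWb : Bornology.IsBounded W) {x : ℝ} (hx : x ∈ W) :
    ∃ a b, a < b ∧ a ∉ W ∧ b ∉ W ∧ connectedComponentIn W x = Ioo a b := by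
  set C := connectedComponentIn W x
  have hCW : C ⊆ W := connectedComponentIn_subset W x
  have hCb : Bornology.IsBounded C := hWb.subset hCW
  have hC : C = Ioo (sInf C) (sSup C) := by
    refine (IsConnected.Ioo_csInf_csSup_subset (isConnected_connectedComponentIn_iff.2 hx)
      hCb.bddBelow hCb.bddAbove).antisymm' ?_
    calc C = interior C := hW.connectedComponentIn.interior_eq.symm
      _ ⊆ interior (Icc (sInf C) (sSup C)) :=
        interior_mono (subset_Icc_csInf_csSup hCb.bddBelow hCb.bddAbove)
      _ = Ioo (sInf C) (sSup C) := interior_Icc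
  set a := sInf C
  set b := sSup C
  have hxC : x ∈ Ioo a b := hC ▸ mem_connectedComponentIn hx
  have hab : a < b := hxC.1.trans hxC.2
  refine ⟨a, b, hab, fun ha => ?_, fun hb => ?_, hC⟩
  · have : Ico a b ⊆ C := isPreconnected_Ico.subset_connectedComponentIn (Ioo_subset_Ico_self hxC)
      (Ioo_insert_left hab ▸ insert_subset ha (hC ▸ hCW))
    exact (hC ▸ this ⟨le_rfl, hab⟩ : a ∈ Ioo a b).1.false
  · have : Ioc a b ⊆ C := isPreconnected_Ioc.subset_connectedComponentIn (Ioo_subset_Ioc_self hxC)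
      (Ioo_insert_right hab ▸ insert_subset hb (hC ▸ hCW))
    exact (hC ▸ this ⟨hab, le_rfl⟩ : b ∈ Ioo a b).2.false

theorem measure_le_of_forall_Ioo {μ ν : Measure ℝ} {W : Set ℝ} (hW : IsOpen W)
    (hWb : Bornology.IsBounded W)
    (h : ∀ a b, a < b → a ∉ W → b ∉ W → Ioo a b ⊆ W → ν (Ioo a b) ≤ μ (Ioo a b)) :
    ν W ≤ μ W :=
  measure_le_of_forall_connectedComponentIn_le hW fun x hx => by
    obtain ⟨a, b, hab, ha, hb, hC⟩ := exists_connectedComponentIn_eq_Ioo hW hWb hx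
    rw [hC]
    exact h a b hab ha hb (hC ▸ connectedComponentIn_subset W x)

theorem not_Ioo_subset_union_of_two_mul_volume_le {μ : Measure ℝ} [IsProbabilityMeasure μ]
    {U V : Set ℝ} (hU : IsOpen U) (hV : IsOpen V) (hUμ : 2 * volume U ≤ μ U)
    (hVμ : 2 * volume V ≤ μ V) : ¬Ioo 0 1 ⊆ U ∪ V := by
  intro hcover
  have h1 : 1 ≤ volume (U ∪ V) := by simpa using measure_mono (μ := volume) hcover
  have key : 2 + 2 * volume (U ∩ V) ≤ 1 + μ (U ∩ V) := calc
    2 + 2 * volume (U ∩ V) ≤ 2 * volume (U ∪ V) + 2 * volume (U ∩ V) := by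
      gcongr
      calc (2 : ℝ≥0∞) = 2 * 1 := (mul_one 2).symm
        _ ≤ 2 * volume (U ∪ V) := by gcongr
    _ = 2 * volume U + 2 * volume V := by
      rw [← mul_add, measure_union_add_inter _ hV.measurableSet, mul_add]
    _ ≤ μ U + μ V := add_le_add hUμ hVμ
    _ = μ (U ∪ V) + μ (U ∩ V) := (measure_union_add_inter _ hV.measurableSet).symm
    _ ≤ 1 + μ (U ∩ V) := by gcongr; exact prob_le_one
  have hUV : U ∩ V = ∅ := by
    have : 2 + 2 * volume (U ∩ V) ≤ 2 + 0 := calc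
      _ ≤ 1 + μ (U ∩ V) := key
      _ ≤ 1 + 1 := by gcongr; exact prob_le_one
      _ = 2 + 0 := by norm_num
    rw [← (hU.inter hV).measure_eq_zero_iff volume]
    simpa using (ENNReal.add_le_add_iff_left ENNReal.ofNat_ne_top).1 this
  rw [hUV, measure_empty, measure_empty] at key
  norm_num at key

section Shadow

def leftShadow (g : ℝ → ℝ) : Set ℝ := {x | ∃ y < x, g x < g y}

def rightShadow (g : ℝ → ℝ) : Set ℝ := {x | ∃ y > x, g y < g x}

variable {g : ℝ → ℝ}

theorem isOpen_leftShadow (hg : Continuous g) : IsOpen (leftShadow g) := by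
  have : leftShadow g = ⋃ y, Ioi y ∩ {x | g x < g y} := by
    ext x
    simp [leftShadow]
  rw [this]
  exact isOpen_iUnion fun y => isOpen_Ioi.inter (isOpen_lt hg continuous_const)

theorem le_of_Ioo_subset_leftShadow (hg : Continuous g) {a b : ℝ} (hab : a < b)
    (ha : a ∉ leftShadow g) (hsub : Ioo a b ⊆ leftShadow g) : g b ≤ g a := by
  have hIoo : Ioo a b ⊆ {x | g x ≤ g a} := by
    intro x hx
    obtain ⟨t, ht, hmax⟩ :=
      isCompact_Icc.exists_isMaxOn (nonempty_Icc.2 hx.1.le) hg.continuousOn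
    -- a maximum of `g` on `[a, x]` away from `a` would be shadowed from a point left of `a`,
    -- and then so would `a`
    have hta : g t ≤ g a := by
      rcases ht.1.eq_or_lt with rfl | hat
      · exact le_rfl
      obtain ⟨y, hyt, hgy⟩ := hsub ⟨hat, ht.2.trans_lt hx.2⟩
      rcases le_or_gt a y with hay | hya
      · exact absurd (hmax ⟨hay, hyt.le.trans ht.2⟩) hgy.not_ge
      · exact absurd ⟨y, hya, (hmax ⟨le_rfl, hx.1.le⟩).trans_lt hgy⟩ ha
    exact (hmax ⟨hx.1.le, le_rfl⟩).trans hta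
  have hIcc := (isClosed_le hg continuous_const).closure_subset_iff.2 hIoo
  rw [closure_Ioo hab.ne] at hIcc
  exact hIcc ⟨hab.le, le_rfl⟩

theorem rightShadow_eq_neg_leftShadow : rightShadow g = -leftShadow (fun t => -g (-t)) := by
  ext x
  simp only [rightShadow, leftShadow, mem_neg, mem_ofPred_eq, neg_neg, neg_lt_neg_iff]
  constructor
  · rintro ⟨y, hxy, hy⟩
    exact ⟨-y, neg_lt_neg hxy, by rwa [neg_neg]⟩
  · rintro ⟨y, hyx, hy⟩
    exact ⟨-y, lt_neg_of_lt_neg hyx, hy⟩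

theorem isOpen_rightShadow (hg : Continuous g) : IsOpen (rightShadow g) := by
  rw [rightShadow_eq_neg_leftShadow]
  exact (isOpen_leftShadow (by fun_prop)).neg

theorem le_of_Ioo_subset_rightShadow (hg : Continuous g) {a b : ℝ} (hab : a < b)
    (hb : b ∉ rightShadow g) (hsub : Ioo a b ⊆ rightShadow g) : g b ≤ g a := by
  rw [rightShadow_eq_neg_leftShadow] at hb hsub
  have := le_of_Ioo_subset_leftShadow (g := fun t => -g (-t)) (by fun_prop) (neg_lt_neg hab) hb
    fun t ht => by simpa using hsub (neg_mem_Ioo_iff.2 ⟨ht.1, ht.2⟩ : -t ∈ Ioo a b)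
  simpa using this

end Shadow

theorem continuous_cdf {μ : Measure ℝ} [IsProbabilityMeasure μ] [NullSingletonClass μ] :
    Continuous (cdf μ) := by
  refine continuous_iff_continuousAt.2 fun x => continuousAt_iff_continuous_left'_right'.2
    ⟨(monotone_cdf μ).continuousWithinAt_Iio_iff_leftLim_eq.2 ?_,
      ((cdf μ).right_continuous x).mono Ioi_subset_Ici_self⟩
  have h := (cdf μ).measure_singleton x
  rw [measure_cdf, measure_singleton, eq_comm, ENNReal.ofReal_eq_zero, sub_nonpos] at h
  exact ((monotone_cdf μ).leftLim_le le_rfl).antisymm h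

noncomputable def twoMulSubCdf (μ : Measure ℝ) (t : ℝ) : ℝ := 2 * t - cdf μ t

section
variable {μ : Measure ℝ} [IsProbabilityMeasure μ]

theorem measure_Ioc_eq_ofReal_cdf_sub (s t : ℝ) :
    μ (Ioc s t) = ENNReal.ofReal (cdf μ t - cdf μ s) := by
  rw [← (cdf μ).measure_Ioc, measure_cdf]

section
variable (hμ : μ (Icc 0 1) = 1)
include hμ

theorem cdf_eq_zero_of_neg {t : ℝ} (ht : t < 0) : cdf μ t = 0 := by
  have hsub : Iic t ⊆ (Icc 0 1)ᶜ := fun s hs hs' => (hs'.1.trans hs).not_gt ht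
  have : μ (Iic t) = 0 := measure_mono_null hsub ((prob_compl_eq_zero_iff measurableSet_Icc).2 hμ)
  rw [cdf_eq_real, measureReal_def, this, ENNReal.toReal_zero]

theorem cdf_eq_one_of_one_le {t : ℝ} (ht : 1 ≤ t) : cdf μ t = 1 := by
  have : μ (Iic t) = 1 := le_antisymm prob_le_one (hμ ▸ measure_mono fun s hs => hs.2.trans ht)
  rw [cdf_eq_real, measureReal_def, this, ENNReal.toReal_one]

theorem leftShadow_twoMulSubCdf_subset : leftShadow (twoMulSubCdf μ) ⊆ Ioo (-1) 2 := by
  rintro x ⟨y, hyx, hgy⟩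
  simp only [twoMulSubCdf] at hgy
  have := cdf_nonneg μ y
  constructor
  · by_contra! hx
    rw [cdf_eq_zero_of_neg hμ (show x < 0 by linarith),
      cdf_eq_zero_of_neg hμ (show y < 0 by linarith)] at hgy
    linarith
  · by_contra! hx
    rw [cdf_eq_one_of_one_le hμ (show 1 ≤ x by linarith)] at hgy
    rcases lt_or_ge y 1 with hy | hy
    · linarith
    · rw [cdf_eq_one_of_one_le hμ hy] at hgy
      linarith

theorem rightShadow_twoMulSubCdf_subset : rightShadow (twoMulSubCdf μ) ⊆ Ioo (-1) 2 := by
  rintro x ⟨y, hxy, hgy⟩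
  simp only [twoMulSubCdf] at hgy
  have := cdf_le_one μ y
  constructor
  · by_contra! hx
    rw [cdf_eq_zero_of_neg hμ (show x < 0 by linarith)] at hgy
    rcases lt_or_ge y 0 with hy | hy
    · rw [cdf_eq_zero_of_neg hμ hy] at hgy
      linarith
    · linarith
  · by_contra! hx
    rw [cdf_eq_one_of_one_le hμ (show 1 ≤ x by linarith),
      cdf_eq_one_of_one_le hμ (show 1 ≤ y by linarith)] at hgy
    linarith

end

variable [NullSingletonClass μ]

theorem continuous_twoMulSubCdf : Continuous (twoMulSubCdf μ) :=
  (continuous_const.mul continuous_id).sub continuous_cdf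

theorem measure_Icc_le_of_twoMulSubCdf_le {s t : ℝ} (h : twoMulSubCdf μ s ≤ twoMulSubCdf μ t) :
    μ (Icc s t) ≤ ENNReal.ofReal (2 * (t - s)) := by
  rw [← measure_congr (Ioc_ae_eq_Icc (μ := μ)), measure_Ioc_eq_ofReal_cdf_sub]
  exact ENNReal.ofReal_le_ofReal (by unfold twoMulSubCdf at h; linarith)

theorem two_mul_volume_Ioo_le_of_twoMulSubCdf_le {s t : ℝ}
    (h : twoMulSubCdf μ t ≤ twoMulSubCdf μ s) : 2 * volume (Ioo s t) ≤ μ (Ioo s t) := by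
  rw [measure_congr (Ioo_ae_eq_Ioc (μ := μ)), measure_Ioc_eq_ofReal_cdf_sub, Real.volume_Ioo,
    ← ENNReal.ofReal_ofNat 2, ← ENNReal.ofReal_mul zero_le_two]
  exact ENNReal.ofReal_le_ofReal (by unfold twoMulSubCdf at h; linarith)

theorem two_mul_volume_leftShadow_le (hμ : μ (Icc 0 1) = 1) :
    2 * volume (leftShadow (twoMulSubCdf μ)) ≤ μ (leftShadow (twoMulSubCdf μ)) := by
  have hg : Continuous (twoMulSubCdf μ) := continuous_twoMulSubCdf
  rw [← smul_eq_mul, ← Measure.smul_apply]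
  refine measure_le_of_forall_Ioo (isOpen_leftShadow hg)
    ((Metric.isBounded_Ioo (-1) 2).subset (leftShadow_twoMulSubCdf_subset hμ))
    fun _ _ hab ha _ hsub => ?_
  rw [Measure.smul_apply, smul_eq_mul]
  exact two_mul_volume_Ioo_le_of_twoMulSubCdf_le (le_of_Ioo_subset_leftShadow hg hab ha hsub)

theorem two_mul_volume_rightShadow_le (hμ : μ (Icc 0 1) = 1) :
    2 * volume (rightShadow (twoMulSubCdf μ)) ≤ μ (rightShadow (twoMulSubCdf μ)) := by
  have hg : Continuous (twoMulSubCdf μ) := continuous_twoMulSubCdf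
  rw [← smul_eq_mul, ← Measure.smul_apply]
  refine measure_le_of_forall_Ioo (isOpen_rightShadow hg)
    ((Metric.isBounded_Ioo (-1) 2).subset (rightShadow_twoMulSubCdf_subset hμ))
    fun _ _ hab _ hb hsub => ?_
  rw [Measure.smul_apply, smul_eq_mul]
  exact two_mul_volume_Ioo_le_of_twoMulSubCdf_le (le_of_Ioo_subset_rightShadow hg hab hb hsub)

end

/-- Lemma 10 (single-point smart partition lemma): for any atomless Borel
probability measure on `[0,1]`, there is a point `x ∈ (0,1)` such that every
interval of length `η` ending or starting at `x` has mass at most `2η`. -/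
theorem stmt_3 (μ : Measure ℝ) [IsProbabilityMeasure μ]
    (hμ1 : μ (Set.Icc (0 : ℝ) 1) = 1) (hatom : ∀ t : ℝ, μ {t} = 0) :
    ∃ x ∈ Set.Ioo (0 : ℝ) 1, ∀ η > (0 : ℝ),
      μ (Set.Icc (x - η) x) ≤ ENNReal.ofReal (2 * η) ∧
      μ (Set.Icc x (x + η)) ≤ ENNReal.ofReal (2 * η) := by
  have : NullSingletonClass μ := ⟨hatom⟩
  have hg : Continuous (twoMulSubCdf μ) := continuous_twoMulSubCdf
  obtain ⟨x, hx, hxUV⟩ := not_subset.1 <| not_Ioo_subset_union_of_two_mul_volume_le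
    (isOpen_leftShadow hg) (isOpen_rightShadow hg) (two_mul_volume_leftShadow_le hμ1)
    (two_mul_volume_rightShadow_le hμ1)
  obtain ⟨hxU, hxV⟩ := not_or.1 hxUV
  refine ⟨x, hx, fun η hη => ⟨?_, ?_⟩⟩
  · have := measure_Icc_le_of_twoMulSubCdf_le (not_lt.1 fun h => hxU ⟨x - η, by linarith, h⟩)
    rwa [sub_sub_cancel] at this
  · have := measure_Icc_le_of_twoMulSubCdf_le (not_lt.1 fun h => hxV ⟨x + η, by linarith, h⟩)
    rwa [add_sub_cancel_left] at this
end

section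
/- Let μ be a Borel probability measure on ℝ whose support is a finite subset of [0,1]. Then there exists a point x ∈ [0,1] such that for every η > 0, both μ([x−η, x]) ≤ 2η and μ([x, x+η]) ≤ 2η. -/
/-!
Let `F` be the distribution function of `μ`, and put `φ(t) = 2t - F(t)` (`drift`) and
`ψ(t) = 2t - F(t⁻)` (`driftLeft`). If, for some level `c`, `ψ ≤ c` on `(-∞, x]` and `φ ≥ c` on
`[x, ∞)`, then `μ [y, z] = F(z) - F(y⁻) ≤ 2 (z - y)` whenever `y ≤ x ≤ z`.

When `μ` has finite support, `φ` increases between atoms and drops from `ψ(a)` to `φ(a)`, by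
`μ {a}`, at an atom `a`. These jumps have total length at most `1`, so some level `c ∈ [0, 1]` is
crossed by none of them; the superlevel set `{φ ≥ c}` is then a closed up-ray `[x, ∞)`, and
`x ∈ [0, 1]` because `φ < 0` on `(-∞, 0)` and `φ(1) ≥ 1`.
-/

open MeasureTheory ProbabilityTheory Set Filter Function Topology

noncomputable def drift (μ : Measure ℝ) (t : ℝ) : ℝ := 2 * t - cdf μ t

noncomputable def driftLeft (μ : Measure ℝ) (t : ℝ) : ℝ := 2 * t - leftLim (cdf μ) t

lemma sub_lt_sum_of_Icc_subset_biUnion_Ioc {ι : Type*} (s : Finset ι) {l r : ι → ℝ}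
    (hlr : ∀ i ∈ s, l i ≤ r i) {u v : ℝ} (huv : u ≤ v)
    (hcover : Icc u v ⊆ ⋃ i ∈ s, Ioc (l i) (r i)) :
    v - u < ∑ i ∈ s, (r i - l i) := by
  obtain ⟨j, hj, hlj, hrj⟩ := mem_iUnion₂.1 (hcover (left_mem_Icc.2 huv))
  have hextend : Ioc (l j) v ⊆ ⋃ i ∈ s, Ioc (l i) (r i) := by
    intro t ⟨hlt, htv⟩
    rcases lt_or_ge t u with htu | hut
    · exact mem_iUnion₂.2 ⟨j, hj, hlt, htu.le.trans hrj⟩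
    · exact hcover ⟨hut, htv⟩
  have hvol : ENNReal.ofReal (v - l j) ≤ ENNReal.ofReal (∑ i ∈ s, (r i - l i)) := by
    rw [ENNReal.ofReal_sum_of_nonneg fun i hi => sub_nonneg.2 (hlr i hi), ← Real.volume_Ioc]
    refine (measure_mono hextend).trans ((measure_biUnion_finset_le s _).trans_eq ?_)
    simp only [Real.volume_Ioc]
  have hlen := (ENNReal.ofReal_le_ofReal_iff
    (Finset.sum_nonneg fun i hi => sub_nonneg.2 (hlr i hi))).1 hvol
  linarith

section

variable {μ : Measure ℝ}

lemma le_drift_of_forall_gt {x c : ℝ} (h : ∀ t > x, c ≤ drift μ t) : c ≤ drift μ x := by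
  have hcont : Tendsto (drift μ) (𝓝[>] x) (𝓝 (drift μ x)) :=
    (((continuous_const.mul continuous_id).continuousWithinAt).sub
      ((cdf μ).right_continuous x)).mono Ioi_subset_Ici_self
  exact ge_of_tendsto hcont (eventually_nhdsWithin_of_forall h)

lemma driftLeft_le_of_forall_lt {y c : ℝ} (h : ∀ t < y, drift μ t ≤ c) : driftLeft μ y ≤ c := by
  have hlim : Tendsto (drift μ) (𝓝[<] y) (𝓝 (driftLeft μ y)) :=
    (((continuous_const.mul continuous_id).tendsto y).mono_left nhdsWithin_le_nhds).sub
      ((cdf μ).mono.tendsto_leftLim y)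
  exact le_of_tendsto hlim (eventually_nhdsWithin_of_forall h)

lemma drift_le_driftLeft (a : ℝ) : drift μ a ≤ driftLeft μ a :=
  sub_le_sub_left ((cdf μ).mono.leftLim_le le_rfl) _

variable [IsProbabilityMeasure μ]

lemma measure_Icc_le_of_driftLeft_le_le_drift {y z c : ℝ} (hy : driftLeft μ y ≤ c)
    (hz : c ≤ drift μ z) : μ (Icc y z) ≤ ENNReal.ofReal (2 * (z - y)) := by
  rw [← measure_cdf μ, StieltjesFunction.measure_Icc]
  exact ENNReal.ofReal_le_ofReal (by unfold drift driftLeft at *; linarith)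

lemma measureReal_singleton_eq_driftLeft_sub_drift (a : ℝ) :
    μ.real {a} = driftLeft μ a - drift μ a := by
  have h := (cdf μ).measure_singleton a
  rw [measure_cdf] at h
  rw [measureReal_def, h, ENNReal.toReal_ofReal (sub_nonneg.2 ((cdf μ).mono.leftLim_le le_rfl))]
  unfold drift driftLeft
  ring

lemma drift_le_drift_of_measure_Ioc_eq_zero {b a : ℝ} (hba : b ≤ a) (h : μ (Ioc b a) = 0) :
    drift μ b ≤ drift μ a := by
  have h' := (cdf μ).measure_Ioc b a
  rw [measure_cdf, h, eq_comm, ENNReal.ofReal_eq_zero] at h'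
  unfold drift
  linarith

lemma drift_le_driftLeft_of_measure_Ioo_eq_zero {b a : ℝ} (hba : b ≤ a) (h : μ (Ioo b a) = 0) :
    drift μ b ≤ driftLeft μ a := by
  have h' := (cdf μ).measure_Ioo (a := b) (b := a)
  rw [measure_cdf, h, eq_comm, ENNReal.ofReal_eq_zero] at h'
  unfold drift driftLeft
  linarith

lemma exists_mem_Icc_forall_notMem_Ioc_drift_driftLeft (s : Finset ℝ) :
    ∃ c ∈ Icc (0 : ℝ) 1, ∀ a ∈ s, c ∉ Ioc (drift μ a) (driftLeft μ a) := by
  by_contra! hcover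
  have hlt := sub_lt_sum_of_Icc_subset_biUnion_Ioc s (l := drift μ) (r := driftLeft μ)
    (fun a _ => drift_le_driftLeft a) zero_le_one fun c hc =>
      let ⟨a, ha, hca⟩ := hcover c hc; mem_iUnion₂.2 ⟨a, ha, hca⟩
  simp only [← measureReal_singleton_eq_driftLeft_sub_drift, sum_measureReal_singleton] at hlt
  linarith [measureReal_le_one (μ := μ) (s := (s : Set ℝ))]

lemma isUpperSet_setOf_le_drift {s : Finset ℝ} (hsupp : μ (↑s)ᶜ = 0) {c : ℝ}
    (hc : ∀ a ∈ s, c ∉ Ioc (drift μ a) (driftLeft μ a)) : IsUpperSet {t | c ≤ drift μ t} := by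
  intro y z hyz (hy : c ≤ drift μ y)
  change c ≤ drift μ z
  by_contra! hz
  -- Breakpoints `y < … ≤ z`; `q` is the first one below level `c` and `r` the one before it.
  -- Since `φ` does not decrease between breakpoints, the jump at `q` crosses `c`.
  set P := insert y (s.filter fun a => y < a ∧ a ≤ z)
  have mem_P {a : ℝ} (ha : a ∈ s) (hya : y < a) (haz : a ≤ z) : a ∈ P :=
    Finset.mem_insert_of_mem (Finset.mem_filter.2 ⟨ha, hya, haz⟩)
  have P_bounds {a : ℝ} (ha : a ∈ P) : y ≤ a ∧ a ≤ z := by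
    rcases Finset.mem_insert.1 ha with rfl | ha
    · exact ⟨le_rfl, hyz⟩
    · obtain ⟨-, hya, haz⟩ := Finset.mem_filter.1 ha
      exact ⟨hya.le, haz⟩
  have P_atom {a : ℝ} (ha : a ∈ P) (hya : y < a) : a ∈ s := by
    rcases Finset.mem_insert.1 ha with rfl | ha
    · exact absurd hya (lt_irrefl _)
    · exact (Finset.mem_filter.1 ha).1
  set p := P.max' (Finset.insert_nonempty _ _)
  have hp : p ∈ P := P.max'_mem _
  have hp_lt : drift μ p < c := by
    refine (drift_le_drift_of_measure_Ioc_eq_zero (P_bounds hp).2 ?_).trans_lt hz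
    exact measure_mono_null (fun a ha has =>
      (P.le_max' a (mem_P has ((P_bounds hp).1.trans_lt ha.1) ha.2)).not_gt ha.1) hsupp
  set Q := P.filter fun a => drift μ a < c
  have hQ : Q.Nonempty := ⟨p, Finset.mem_filter.2 ⟨hp, hp_lt⟩⟩
  set q := Q.min' hQ
  obtain ⟨hqP, hq_lt⟩ := Finset.mem_filter.1 (Q.min'_mem hQ)
  have hyq : y < q := (P_bounds hqP).1.lt_of_ne fun h => hq_lt.not_ge (h ▸ hy)
  set R := P.filter (· < q)
  have hR : R.Nonempty := ⟨y, Finset.mem_filter.2 ⟨Finset.mem_insert_self _ _, hyq⟩⟩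
  set r := R.max' hR
  obtain ⟨hrP, hrq⟩ := Finset.mem_filter.1 (R.max'_mem hR)
  have hr : c ≤ drift μ r :=
    not_lt.1 fun h => (Q.min'_le r (Finset.mem_filter.2 ⟨hrP, h⟩)).not_gt hrq
  have hq_ge : c ≤ driftLeft μ q := by
    refine hr.trans (drift_le_driftLeft_of_measure_Ioo_eq_zero hrq.le ?_)
    exact measure_mono_null (fun a ha has => (R.le_max' a (Finset.mem_filter.2
      ⟨mem_P has ((P_bounds hrP).1.trans_lt ha.1) (ha.2.trans_le (P_bounds hqP).2).le,
        ha.2⟩)).not_gt ha.1) hsupp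
  exact hc q (P_atom hqP hyq) ⟨hq_lt, hq_ge⟩

lemma exists_mem_Icc_driftLeft_le_le_drift {s : Finset ℝ} (hsupp : μ (↑s)ᶜ = 0) :
    ∃ x ∈ Icc (0 : ℝ) 1, ∃ c, (∀ y ≤ x, driftLeft μ y ≤ c) ∧ ∀ z ≥ x, c ≤ drift μ z := by
  obtain ⟨c, ⟨hc0, hc1⟩, hc⟩ := exists_mem_Icc_forall_notMem_Ioc_drift_driftLeft (μ := μ) s
  set U := {t | c ≤ drift μ t}
  have hU : IsUpperSet U := isUpperSet_setOf_le_drift hsupp hc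
  have one_mem : (1 : ℝ) ∈ U := by
    change c ≤ 2 * 1 - cdf μ 1
    linarith [cdf_le_one μ 1]
  have nonneg_of_mem {t : ℝ} (ht : t ∈ U) : 0 ≤ t := by
    by_contra! ht0
    have : c ≤ 2 * t - cdf μ t := ht
    linarith [cdf_nonneg μ t]
  have hbdd : BddBelow U := ⟨0, fun t ht => nonneg_of_mem ht⟩
  set x := sInf U
  have hx_mem : x ∈ U := le_drift_of_forall_gt fun t ht =>
    let ⟨u, hu, hut⟩ := exists_lt_of_csInf_lt ⟨1, one_mem⟩ ht
    hU hut.le hu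
  refine ⟨x, ⟨nonneg_of_mem hx_mem, csInf_le hbdd one_mem⟩, c, fun y hy => ?_,
    fun z hz => hU hz hx_mem⟩
  exact driftLeft_le_of_forall_lt fun t ht =>
    (not_le.1 fun htU => (csInf_le hbdd htU).not_gt (ht.trans_le hy)).le

end

theorem stmt_5_general (μ : Measure ℝ) [IsProbabilityMeasure μ]
    (s : Finset ℝ)
    (hsupp : μ ((s : Set ℝ)ᶜ) = 0) :
    ∃ x ∈ Set.Icc (0 : ℝ) 1, ∀ η > (0 : ℝ),
      μ (Set.Icc (x - η) x) ≤ ENNReal.ofReal (2 * η) ∧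
      μ (Set.Icc x (x + η)) ≤ ENNReal.ofReal (2 * η) := by
  obtain ⟨x, hx, c, hleft, hright⟩ := exists_mem_Icc_driftLeft_le_le_drift hsupp
  refine ⟨x, hx, fun η hη => ⟨?_, ?_⟩⟩
  · simpa using measure_Icc_le_of_driftLeft_le_le_drift (hleft (x - η) (by linarith))
      (hright x le_rfl)
  · simpa using measure_Icc_le_of_driftLeft_le_le_drift (hleft x le_rfl)
      (hright (x + η) (by linarith))

/-- Existence portion of the corollary in Appendix B: for a Borel probability
measure on `ℝ` whose support is a finite subset of `[0,1]`, there is a point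
`x ∈ [0,1]` such that every interval of length `η` ending or starting at `x`
has mass at most `2η`. -/
theorem stmt_5 (μ : Measure ℝ) [IsProbabilityMeasure μ]
    (s : Finset ℝ) (hs : (s : Set ℝ) ⊆ Set.Icc (0 : ℝ) 1)
    (hsupp : μ ((s : Set ℝ)ᶜ) = 0) :
    ∃ x ∈ Set.Icc (0 : ℝ) 1, ∀ η > (0 : ℝ),
      μ (Set.Icc (x - η) x) ≤ ENNReal.ofReal (2 * η) ∧
      μ (Set.Icc x (x + η)) ≤ ENNReal.ofReal (2 * η) :=
  stmt_5_general μ s hsupp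
end

section
/- Let m ≥ 1 and let x_1, ..., x_m be independent, uniformly distributed random points in 𝔽₂^m. Then the probability that x_1, ..., x_m are affinely independent over 𝔽₂ is at least 1/2 + 2^{-m}. -/
/-!
A tuple stays affinely independent when a point outside the affine span of its entries is
appended, and the affine span of `k + 1` points of an `𝔽_q`-affine space has at most `q ^ k`
elements. Adding the points one at a time, the proportion of affinely dependent `m`-tuples in
`𝔽₂^m` is therefore at most `∑_{k < m - 1} 2 ^ k / 2 ^ m = 1/2 - 2^{-m}`.
-/

open Finset Module

open scoped Classical in
theorem Finset.card_filter_fst_mem_le {A B : Type*} [Fintype A] [Fintype B] (S : B → Set A)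
    {c : ℕ} (hS : ∀ b, Nat.card (S b) ≤ c) :
    #{ab : A × B | ab.1 ∈ S ab.2} ≤ c * Fintype.card B := by
  rw [card_filter, Fintype.sum_prod_type_right, mul_comm, ← smul_eq_mul, ← card_univ]
  refine sum_le_card_nsmul _ _ _ fun b _ => ?_
  rw [← card_filter, ← Set.toFinset_ofPred, Set.toFinset_card, ← Nat.card_eq_fintype_card]
  exact hS b

section

variable {K V P : Type*} [Field K] [AddCommGroup V] [Module K V] [AddTorsor V P]

theorem AffineIndependent.snoc {n : ℕ} {p : Fin n → P} (hp : AffineIndependent K p) {q : P}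
    (hq : q ∉ affineSpan K (Set.range p)) :
    AffineIndependent K (Fin.snoc p q : Fin (n + 1) → P) := by
  have himage : (Fin.snoc p q : Fin (n + 1) → P) '' {i | i ≠ Fin.last n} = Set.range p := by
    ext; simp [Fin.exists_fin_succ']
  refine AffineIndependent.affineIndependent_of_notMem_span (i := Fin.last n) ?_
    (by simpa [himage])
  refine (affineIndependent_equiv (finSuccAboveEquiv (Fin.last n))).1 ?_
  convert hp using 1
  ext i
  simp [finSuccAboveEquiv_apply]

theorem AffineSubspace.natCard_eq_pow_finrank_direction [Module.Finite K V]
    (s : AffineSubspace K P) [Nonempty s] :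
    Nat.card s = Nat.card K ^ finrank K s.direction := by
  rw [← Module.natCard_eq_pow_finrank]
  exact Nat.card_congr (Equiv.vaddConst (Classical.arbitrary s)).symm

variable [Finite K] [Module.Finite K V]

theorem natCard_affineSpan_range_le {n : ℕ} (p : Fin (n + 1) → P) :
    Nat.card (affineSpan K (Set.range p)) ≤ Nat.card K ^ n := by
  have : Nonempty (affineSpan K (Set.range p)) :=
    ((affineSpan_nonempty K).2 (Set.range_nonempty p)).to_subtype
  rw [AffineSubspace.natCard_eq_pow_finrank_direction, direction_affineSpan]
  exact Nat.pow_le_pow_right Nat.card_pos (finrank_vectorSpan_range_le K p (by simp))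

variable [Fintype P]

open scoped Classical in
theorem card_not_affineIndependent_succ_le (n : ℕ) :
    #{x : Fin (n + 2) → P | ¬AffineIndependent K x} ≤
      Fintype.card P * #{y : Fin (n + 1) → P | ¬AffineIndependent K y} +
        Nat.card K ^ n * Fintype.card P ^ (n + 1) := by
  calc #{x : Fin (n + 2) → P | ¬AffineIndependent K x}
      = #{qy : P × (Fin (n + 1) → P) |
          ¬AffineIndependent K (Fin.snoc qy.2 qy.1 : Fin (n + 2) → P)} :=
        card_equiv (Fin.snocEquiv fun _ => P).symm (by simp)
    _ ≤ #{qy : P × (Fin (n + 1) → P) |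
          ¬AffineIndependent K qy.2 ∨ qy.1 ∈ affineSpan K (Set.range qy.2)} := by
        refine card_le_card (monotone_filter_right _ fun qy _ hqy => ?_)
        by_contra! h
        exact hqy (h.1.snoc h.2)
    _ ≤ #{qy : P × (Fin (n + 1) → P) | ¬AffineIndependent K qy.2} +
          #{qy : P × (Fin (n + 1) → P) | qy.1 ∈ affineSpan K (Set.range qy.2)} := by
        rw [filter_or]
        exact card_union_le _ _
    _ ≤ _ := by
        have hsnd : #{qy : P × (Fin (n + 1) → P) | ¬AffineIndependent K qy.2} =
            Fintype.card P * #{y : Fin (n + 1) → P | ¬AffineIndependent K y} := by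
          rw [← card_univ, ← card_product, ← filter_product_right, univ_product_univ]
        have hfun : Fintype.card P ^ (n + 1) = Fintype.card (Fin (n + 1) → P) := by simp
        rw [hsnd, hfun]
        gcongr
        exact card_filter_fst_mem_le _ natCard_affineSpan_range_le

open scoped Classical in
theorem card_not_affineIndependent_le (n : ℕ) :
    #{x : Fin (n + 1) → P | ¬AffineIndependent K x} ≤
      (∑ k ∈ range n, Nat.card K ^ k) * Fintype.card P ^ n := by
  induction n with
  | zero => simp [affineIndependent_of_subsingleton]
  | succ n ih =>
    calc _ ≤ _ := card_not_affineIndependent_succ_le n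
      _ ≤ Fintype.card P * ((∑ k ∈ range n, Nat.card K ^ k) * Fintype.card P ^ n) +
            Nat.card K ^ n * Fintype.card P ^ (n + 1) := by gcongr
      _ = _ := by rw [sum_range_succ]; ring

open scoped Classical in
theorem card_pow_le_card_affineIndependent_add (n : ℕ) :
    Fintype.card P ^ (n + 1) ≤ #{x : Fin (n + 1) → P | AffineIndependent K x} +
      (∑ k ∈ range n, Nat.card K ^ k) * Fintype.card P ^ n := by
  calc Fintype.card P ^ (n + 1) = #{x : Fin (n + 1) → P | AffineIndependent K x} +
        #{x : Fin (n + 1) → P | ¬AffineIndependent K x} := by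
        rw [card_filter_add_card_filter_not, card_univ, Fintype.card_fun, Fintype.card_fin]
    _ ≤ _ := by gcongr; exact card_not_affineIndependent_le n

end

open scoped Classical in
/-- In the linear classification model `LC_m`, the first `m` uniformly random
samples are affinely independent (all "novel") with probability at least
`1/2 + 2^{-m}`. -/
theorem stmt_10 (m : ℕ) (hm : 1 ≤ m) :
    (1 : ℝ) / 2 + (2 : ℝ) ^ (-(m : ℤ)) ≤
      ((Finset.univ.filter
          (fun x : Fin m → (Fin m → ZMod 2) =>
            AffineIndependent (ZMod 2) x)).card : ℝ) / 2 ^ (m * m) := by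
  obtain ⟨n, rfl⟩ : ∃ n, m = n + 1 := ⟨m - 1, by omega⟩
  have hcount :=
    card_pow_le_card_affineIndependent_add (K := ZMod 2) (P := Fin (n + 1) → ZMod 2) n
  simp only [Nat.card_zmod, Fintype.card_fun, Fintype.card_fin, ZMod.card] at hcount
  have hcount_real : ((2 : ℝ) ^ (n + 1)) ^ (n + 1) ≤
      #{x : Fin (n + 1) → Fin (n + 1) → ZMod 2 | AffineIndependent (ZMod 2) x} +
        (2 ^ n - 1) * (2 ^ (n + 1)) ^ n := by
    have := (Nat.cast_le (α := ℝ)).2 hcount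
    push_cast at this
    rwa [geom_sum_eq (by norm_num), show (2 : ℝ) - 1 = 1 by norm_num, div_one] at this
  rw [zpow_neg, zpow_natCast, pow_mul, le_div_iff₀ (by positivity)]
  set x : ℝ := 2 ^ n
  have hx : 0 < x := by positivity
  rw [show (2 : ℝ) ^ (n + 1) = 2 * x by rw [pow_succ]; ring, pow_succ] at hcount_real ⊢
  set C := (2 * x) ^ n
  have hlhs : (1 / 2 + (2 * x)⁻¹) * (C * (2 * x)) = C * x + C := by
    field_simp
  linarith
end

section
/- Let m ≥ 1, n ≥ 1, and let x_1, ..., x_n be independent, uniformly distributed random points in 𝔽₂^m. Then the probability that the affine span of {x_1, ..., x_n} over 𝔽₂ is not all of 𝔽₂^m is at most 2^{m+1−n}. In particular, if n > 2m this probability is at most 2^{1−n/2}. -/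
/-!
Tuples that fail to span affinely lie on an affine hyperplane `{f = c}` with `f` a nonzero
linear functional. Each such hyperplane has `|V| / |K|` points, so a union bound over the at
most `|V| · |K|` pairs `(f, c)` gives at most `|V| · |K| · (|V| / |K|)^n` bad tuples; for
`V = 𝔽₂^m` this is `2^(m+1) · 2^((m-1) n)` out of `2^(mn)`.
-/

open Finset

theorem Fintype.card_filter_forall_apply {ι α : Type*} [Fintype ι] [DecidableEq ι] [Fintype α]
    (p : α → Prop) [DecidablePred p] [DecidablePred fun x : ι → α => ∀ i, p (x i)] :
    #{x : ι → α | ∀ i, p (x i)} = #{a | p a} ^ Fintype.card ι := by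
  have hpi : ({x | ∀ i, p (x i)} : Finset (ι → α)) = piFinset fun _ => {a | p a} := by
    ext; simp
  rw [hpi, card_piFinset, prod_const, card_univ]

variable {K V : Type*} [Field K] [AddCommGroup V] [Module K V]

theorem exists_dual_ne_zero_constant_on_of_affineSpan_ne_top {s : Set V} (hs : s.Nonempty)
    (h : affineSpan K s ≠ ⊤) :
    ∃ f : Module.Dual K V, f ≠ 0 ∧ ∃ c, ∀ v ∈ s, f v = c := by
  obtain ⟨p, hp⟩ := hs
  rw [Ne, AffineSubspace.affineSpan_eq_top_iff_vectorSpan_eq_top_of_nonempty K V V ⟨p, hp⟩]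
    at h
  obtain ⟨f, hf, hspan⟩ := Submodule.exists_dual_map_eq_bot_of_lt_top (lt_top_iff_ne_top.2 h)
    inferInstance
  refine ⟨f, hf, f p, fun v hv => ?_⟩
  have hker : v -ᵥ p ∈ LinearMap.ker f :=
    LinearMap.le_ker_iff_map.2 hspan (vsub_mem_vectorSpan K hv hp)
  rwa [LinearMap.mem_ker, vsub_eq_sub, map_sub, sub_eq_zero] at hker

theorem Module.Dual.card_fiber_mul_card [Fintype K] [Fintype V] [DecidableEq K]
    {f : Module.Dual K V} (hf : f ≠ 0) (c : K) :
    #{v | f v = c} * Fintype.card K = Fintype.card V := by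
  have hsurj := LinearMap.surjective_of_ne_zero hf
  have hfiber (c' : K) : #{v | f v = c'} = #{v | f v = c} :=
    AddMonoidHom.card_fiber_eq_of_mem_range f (hsurj c') (hsurj c)
  calc #{v | f v = c} * Fintype.card K = ∑ c' : K, #{v | f v = c'} := by
        simp [hfiber, mul_comm]
    _ = Fintype.card V := (card_eq_sum_card_fiberwise (by simp)).symm

open scoped Classical in
theorem card_affineSpan_ne_top_mul_le [Fintype K] [Fintype V] {ι : Type*} [Fintype ι]
    [DecidableEq ι] [Nonempty ι] :
    #{x : ι → V | affineSpan K (Set.range x) ≠ ⊤} * Fintype.card K ^ Fintype.card ι ≤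
      Fintype.card V * Fintype.card K * Fintype.card V ^ Fintype.card ι := by
  have : Finite (Module.Dual K V) := Module.finite_of_finite K
  let : Fintype (Module.Dual K V) := Fintype.ofFinite _
  have hcard_dual : Fintype.card (Module.Dual K V) = Fintype.card V := by
    rw [Module.card_eq_pow_finrank (K := K), Module.card_eq_pow_finrank (K := K) (V := V),
      Subspace.dual_finrank_eq]
  set P : Finset (Module.Dual K V × K) := ({f | f ≠ 0} : Finset _) ×ˢ univ
  have hcover : ({x : ι → V | affineSpan K (Set.range x) ≠ ⊤} : Finset _) ⊆
      P.biUnion fun p => ({x | ∀ i, p.1 (x i) = p.2} : Finset (ι → V)) := by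
    intro x hx
    obtain ⟨f, hf, c, hc⟩ := exists_dual_ne_zero_constant_on_of_affineSpan_ne_top
      (Set.range_nonempty x) (mem_filter.1 hx).2
    exact mem_biUnion.2 ⟨(f, c), by simp [P, hf], by simp [hc]⟩
  have hP : #P ≤ Fintype.card V * Fintype.card K := by
    rw [card_product, card_univ, ← hcard_dual]
    gcongr
    exact card_filter_le _ _
  calc _ ≤ (∑ p ∈ P, #{x : ι → V | ∀ i, p.1 (x i) = p.2}) *
        Fintype.card K ^ Fintype.card ι := by
        gcongr
        exact (card_le_card hcover).trans card_biUnion_le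
    _ = ∑ _p ∈ P, Fintype.card V ^ Fintype.card ι := by
        rw [sum_mul]
        refine sum_congr rfl fun p hp => ?_
        rw [Fintype.card_filter_forall_apply (fun v => p.1 v = p.2), ← mul_pow,
          Module.Dual.card_fiber_mul_card (mem_filter.1 (mem_product.1 hp).1).2]
    _ = #P * Fintype.card V ^ Fintype.card ι := by rw [sum_const, smul_eq_mul]
    _ ≤ _ := by gcongr

open scoped Classical in
theorem stmt_11_general (m n : ℕ) (hn : 1 ≤ n) :
    ((Finset.univ.filter
        (fun x : Fin n → (Fin m → ZMod 2) =>
          affineSpan (ZMod 2) (Set.range x) ≠ ⊤)).card : ℝ) / 2 ^ (m * n) ≤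
      (2 : ℝ) ^ ((m : ℤ) + 1 - n) ∧
    (2 * m < n →
      ((Finset.univ.filter
          (fun x : Fin n → (Fin m → ZMod 2) =>
            affineSpan (ZMod 2) (Set.range x) ≠ ⊤)).card : ℝ) / 2 ^ (m * n) ≤
        (2 : ℝ) ^ ((1 : ℝ) - (n : ℝ) / 2)) := by
  have : Nonempty (Fin n) := ⟨⟨0, hn⟩⟩
  have hcount := card_affineSpan_ne_top_mul_le (K := ZMod 2) (V := Fin m → ZMod 2) (ι := Fin n)
  simp only [Fintype.card_pi, Fintype.card_fin, ZMod.card, prod_const, card_univ] at hcount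
  have hfirst : ((Finset.univ.filter
        (fun x : Fin n → (Fin m → ZMod 2) =>
          affineSpan (ZMod 2) (Set.range x) ≠ ⊤)).card : ℝ) / 2 ^ (m * n) ≤
      (2 : ℝ) ^ ((m : ℤ) + 1 - n) := by
    rw [zpow_sub₀ two_ne_zero, div_le_div_iff₀ (by positivity) (by positivity)]
    exact_mod_cast hcount.trans_eq (by ring)
  refine ⟨hfirst, fun hmn => hfirst.trans ?_⟩
  rw [← Real.rpow_intCast]
  apply Real.rpow_le_rpow_of_exponent_le one_le_two
  have : (2 * m : ℝ) < n := by exact_mod_cast hmn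
  push_cast
  linarith

open scoped Classical in
/-- With `n` independent uniform samples in `𝔽₂^m`, the probability that their
affine span is not all of `𝔽₂^m` is at most `2^{m+1-n}`; in particular, for
`n > 2m` it is at most `2^{1-n/2}`. -/
theorem stmt_11 (m n : ℕ) (hm : 1 ≤ m) (hn : 1 ≤ n) :
    ((Finset.univ.filter
        (fun x : Fin n → (Fin m → ZMod 2) =>
          affineSpan (ZMod 2) (Set.range x) ≠ ⊤)).card : ℝ) / 2 ^ (m * n) ≤
      (2 : ℝ) ^ ((m : ℤ) + 1 - n) ∧
    (2 * m < n →
      ((Finset.univ.filter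
          (fun x : Fin n → (Fin m → ZMod 2) =>
            affineSpan (ZMod 2) (Set.range x) ≠ ⊤)).card : ℝ) / 2 ^ (m * n) ≤
        (2 : ℝ) ^ ((1 : ℝ) - (n : ℝ) / 2)) :=
  stmt_11_general m n hn
end

section
/- Let 𝒞 ⊆ 𝔽₂^m be an 𝔽₂-linear subspace with |𝒞| = 2^k for some k ≥ 1, such that every nonzero element of 𝒞 has Hamming weight at least d, where 1 ≤ d ≤ m. Let C* be uniform on 𝒞, let i_1, i_2, ... be independent uniform random indices in {1, ..., m} independent of C*, and for each n ≥ 0 let E_n = { C ∈ 𝒞 : C_{i_j} = C*_{i_j} for all 1 ≤ j ≤ n } be the set of codewords consistent with the first n observations. Then there exists an integer n with k − 1 ≤ n ≤ 2mk/d such that Pr(|E_n| = 2) ≥ d/(4mk); moreover, whenever |E_n| = 2, the two codewords in E_n differ in at least d coordinates, i.e., on at least a d/m fraction of {1, ..., m}. -/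
/-!
Translating by the hidden codeword, the consistent set becomes the subcode `E_n` of codewords
vanishing at the first `n` samples. Each new sample either leaves `E_n` unchanged or halves it, and
while `|E_n| ≥ 3` it halves it with probability at least `d/m`, since a nonzero codeword of `E_n`
is nonzero at `≥ d` coordinates. Only `k - 1` halvings can start from size `≥ 3`, so after
`N ≈ 2m(k-1)/d` samples `|E_N| ≤ 2` with probability at least `1/2`. On that event `|E_n| = 2` for
some `n ∈ [k-1, N]`, and by pigeonhole one such `n` has `Pr(|E_n| = 2) ≥ 1/(2(N - k + 2))`, which
is at least `d/(4mk)`.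
-/

open Finset

def StaysOrHalves (f : ℕ → ℕ) : Prop := ∀ n, f (n + 1) = f n ∨ 2 * f (n + 1) = f n

namespace StaysOrHalves

variable {f : ℕ → ℕ}

theorem antitone (hf : StaysOrHalves f) : Antitone f :=
  antitone_nat_of_succ_le fun n => by rcases hf n with h | h <;> omega

theorem shift (hf : StaysOrHalves f) : StaysOrHalves fun n => f (n + 1) := fun n => hf (n + 1)

theorem le_two_pow_mul (hf : StaysOrHalves f) (n : ℕ) : f 0 ≤ 2 ^ n * f n := by
  induction n with
  | zero => simp
  | succ n ih =>
    have : f n ≤ 2 * f (n + 1) := by rcases hf n with h | h <;> omega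
    calc f 0 ≤ 2 ^ n * f n := ih
      _ ≤ 2 ^ n * (2 * f (n + 1)) := by gcongr
      _ = 2 ^ (n + 1) * f (n + 1) := by ring

theorem card_filter_halving_le (hf : StaysOrHalves f) {k : ℕ} (h0 : f 0 ≤ 2 ^ k) (N : ℕ) :
    #{j ∈ range N | 3 ≤ f j ∧ f (j + 1) < f j} ≤ k - 1 := by
  induction N generalizing f k with
  | zero => simp
  | succ N ih =>
    rw [card_filter, sum_range_succ', ← card_filter]
    split_ifs with h
    · have halve : 2 * f 1 = f 0 := by rcases hf 0 with h' | h' <;> omega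
      have hk : 2 ≤ k := by
        by_contra hk
        interval_cases k <;> simp at h0 <;> omega
      have hpow : 2 ^ k = 2 * 2 ^ (k - 1) := by rw [← pow_succ']; congr 1; omega
      have := ih hf.shift (k := k - 1) (by dsimp; omega)
      omega
    · simpa using ih hf.shift ((hf.antitone (Nat.zero_le 1)).trans h0)

theorem exists_eq_two (hf : StaysOrHalves f) (h0 : 2 ≤ f 0) {N : ℕ} (hN : f N ≤ 2) :
    ∃ n ≤ N, f n = 2 := by
  induction N with
  | zero => exact ⟨0, le_rfl, by omega⟩
  | succ N ih =>
    by_cases h : f N ≤ 2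
    · obtain ⟨n, hn, h2⟩ := ih h
      exact ⟨n, by omega, h2⟩
    · exact ⟨N + 1, le_rfl, by rcases hf N with h' | h' <;> omega⟩

theorem exists_mem_Icc_eq_two (hf : StaysOrHalves f) {k : ℕ} (hk : 1 ≤ k) (h0 : f 0 = 2 ^ k)
    {N : ℕ} (hN : f N ≤ 2) : ∃ n ∈ Icc (k - 1) N, f n = 2 := by
  obtain ⟨n, hnN, hn⟩ := hf.exists_eq_two (h0 ▸ Nat.le_self_pow (by omega) 2) hN
  have : 2 ^ k ≤ 2 ^ (n + 1) := by simpa [h0, hn, pow_succ] using hf.le_two_pow_mul n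
  exact ⟨n, mem_Icc.2 ⟨by have := (Nat.pow_le_pow_iff_right one_lt_two).1 this; omega, hnN⟩, hn⟩

end StaysOrHalves

section BinaryCode

variable {α : Type*} {S : Finset (α → ZMod 2)}

theorem zmod_two_eq_of_ne_zero : ∀ {a b : ZMod 2}, a ≠ 0 → b ≠ 0 → a = b := by decide

theorem add_add_cancel_right_zmod_two (x y : α → ZMod 2) : x + y + y = x :=
  funext fun _ => CharTwo.add_cancel_right _ _

theorem two_mul_card_filter_eq_zero (hS : ∀ x ∈ S, ∀ y ∈ S, x + y ∈ S) (a : α)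
    {c₀ : α → ZMod 2} (hc₀ : c₀ ∈ S) (ha : c₀ a ≠ 0) :
    2 * #{c ∈ S | c a = 0} = #S := by
  have translate : #{c ∈ S | c a = 0} = #{c ∈ S | ¬c a = 0} := by
    refine card_nbij' (· + c₀) (· + c₀) ?_ ?_ ?_ ?_
    · intro c hc
      simp only [coe_filter, Set.mem_ofPred_eq, Pi.add_apply] at hc ⊢
      exact ⟨hS _ hc.1 _ hc₀, by rwa [hc.2, zero_add]⟩
    · intro c hc
      simp only [coe_filter, Set.mem_ofPred_eq, Pi.add_apply] at hc ⊢
      exact ⟨hS _ hc.1 _ hc₀, CharTwo.add_eq_zero.2 (zmod_two_eq_of_ne_zero hc.2 ha)⟩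
    · exact fun c _ => add_add_cancel_right_zmod_two c c₀
    · exact fun c _ => add_add_cancel_right_zmod_two c c₀
  rw [← card_filter_add_card_filter_not (s := S) (fun c => c a = 0), ← translate, two_mul]

theorem filter_eq_self_or_two_mul_card_filter (hS : ∀ x ∈ S, ∀ y ∈ S, x + y ∈ S) (a : α) :
    {c ∈ S | c a = 0} = S ∨ 2 * #{c ∈ S | c a = 0} = #S := by
  by_cases h : ∀ c ∈ S, c a = 0
  · exact Or.inl (filter_true_of_mem h)
  · push Not at h
    obtain ⟨c₀, hc₀, ha⟩ := h
    exact Or.inr (two_mul_card_filter_eq_zero hS a hc₀ ha)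

theorem card_filter_eq_apply_eq_card_filter_eq_zero {n : ℕ}
    (hS : ∀ x ∈ S, ∀ y ∈ S, x + y ∈ S) {x : α → ZMod 2} (hx : x ∈ S) (ι : Fin n → α) :
    #{c ∈ S | ∀ j, c (ι j) = x (ι j)} = #{c ∈ S | ∀ j, c (ι j) = 0} := by
  refine card_nbij' (· + x) (· + x) ?_ ?_ ?_ ?_
  · intro c hc
    simp only [coe_filter, Set.mem_ofPred_eq, Pi.add_apply] at hc ⊢
    exact ⟨hS _ hc.1 _ hx, fun j => CharTwo.add_eq_zero.2 (hc.2 j)⟩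
  · intro c hc
    simp only [coe_filter, Set.mem_ofPred_eq, Pi.add_apply] at hc ⊢
    exact ⟨hS _ hc.1 _ hx, fun j => by rw [hc.2 j, zero_add]⟩
  · exact fun c _ => add_add_cancel_right_zmod_two c x
  · exact fun c _ => add_add_cancel_right_zmod_two c x

theorem card_filter_card_consistent_eq [Fintype α] {n : ℕ}
    (hS : ∀ x ∈ S, ∀ y ∈ S, x + y ∈ S) (r : ℕ) :
    #{p : {x // x ∈ S} × (Fin n → α) |
        #{c ∈ S | ∀ j, c (p.2 j) = (p.1 : α → ZMod 2) (p.2 j)} = r} =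
      #S * #{ι : Fin n → α | #{c ∈ S | ∀ j, c (ι j) = 0} = r} := by
  rw [filter_congr fun p _ => by
      rw [card_filter_eq_apply_eq_card_filter_eq_zero hS p.1.2 p.2],
    ← univ_product_univ,
    filter_product_right (fun ι : Fin n → α => #{c ∈ S | ∀ j, c (ι j) = 0} = r),
    card_product, card_univ, Fintype.card_coe]

theorem hammingDist_eq_hammingNorm_add [Fintype α] (x y : α → ZMod 2) :
    hammingDist x y = hammingNorm (x + y) := by
  simp only [hammingDist, hammingNorm, Pi.add_apply, ne_eq, CharTwo.add_eq_zero]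

theorem le_hammingDist_of_mem [Fintype α] {d : ℕ} (hS : ∀ x ∈ S, ∀ y ∈ S, x + y ∈ S)
    (hd : ∀ c ∈ S, c ≠ 0 → d ≤ hammingNorm c) {x y : α → ZMod 2} (hx : x ∈ S) (hy : y ∈ S)
    (hxy : x ≠ y) : d ≤ hammingDist x y := by
  rw [hammingDist_eq_hammingNorm_add]
  exact hd _ (hS _ hx _ hy) fun h => hxy (funext fun i => CharTwo.add_eq_zero.1 (congrFun h i))

end BinaryCode

theorem mul_card_le_card_mul_of_update {ι α : Type*} [DecidableEq ι] [Fintype ι] [Fintype α]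
    [DecidableEq α] {A B : Finset (ι → α)} (i : ι) {d : ℕ}
    (h : ∀ x ∈ A, d ≤ #{v | Function.update x i v ∈ B}) :
    d * #A ≤ #B * Fintype.card α := by
  calc d * #A = ∑ _x ∈ A, d := by rw [sum_const, smul_eq_mul, mul_comm]
    _ ≤ ∑ x ∈ A, #{v | Function.update x i v ∈ B} := sum_le_sum h
    _ = #{p ∈ A ×ˢ univ | Function.update p.1 i p.2 ∈ B} := by
      simp only [card_filter, sum_product]
    _ ≤ #(B ×ˢ (univ : Finset α)) := by
      refine card_le_card_of_injOn (fun p => (Function.update p.1 i p.2, p.1 i)) ?_ ?_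
      · intro p hp
        simp only [coe_filter, Set.mem_ofPred_eq, mem_product] at hp
        simp [hp.2]
      · rintro ⟨x, v⟩ _ ⟨y, w⟩ _ hxy
        simp only [Prod.mk.injEq] at hxy
        obtain ⟨hupd, hi⟩ := hxy
        have hvw : v = w := by simpa using congrFun hupd i
        refine Prod.ext ?_ hvw
        calc x = Function.update (Function.update x i v) i (x i) := by simp
          _ = Function.update (Function.update y i w) i (y i) := by rw [hupd, hi]
          _ = y := by simp
    _ = #B * Fintype.card α := by rw [card_product, card_univ]

theorem card_filter_comp_castLE {α : Type*} [Fintype α] {n N : ℕ} (h : n ≤ N)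
    (P : (Fin n → α) → Prop) [DecidablePred P] :
    #{x : Fin N → α | P fun j => x (Fin.castLE h j)} =
      #{x : Fin n → α | P x} * Fintype.card α ^ (N - n) := by
  obtain ⟨r, rfl⟩ := Nat.exists_eq_add_of_le h
  have hr : Fintype.card α ^ (n + r - n) = Fintype.card (Fin r → α) := by simp
  rw [hr, ← card_univ, ← card_product, ← filter_product_left, univ_product_univ]
  exact card_equiv (Fin.appendEquiv n r).symm fun x => by simp [Fin.castLE, Fin.castAdd]

section PrefixKernel

variable {m N : ℕ} (C : Finset (Fin m → ZMod 2)) (ι : Fin N → Fin m)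

/-- The consistent set `E_n` of the paper when the hidden codeword is `0` and the samples are `ι`
(constant in `n` from `n = N` on). -/
def prefixKernel (n : ℕ) : Finset (Fin m → ZMod 2) :=
  {c ∈ C | ∀ j : Fin N, (j : ℕ) < n → c (ι j) = 0}

theorem prefixKernel_zero : prefixKernel C ι 0 = C :=
  filter_true_of_mem fun _ _ _ hj => absurd hj (Nat.not_lt_zero _)

theorem prefixKernel_succ {n : ℕ} (hn : n < N) :
    prefixKernel C ι (n + 1) = {c ∈ prefixKernel C ι n | c (ι ⟨n, hn⟩) = 0} := by
  ext c
  simp only [prefixKernel, mem_filter, and_assoc]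
  refine and_congr_right fun _ => ⟨fun h => ⟨fun j hj => h j (by omega), h _ n.lt_succ_self⟩,
    fun ⟨h, hn'⟩ j hj => ?_⟩
  rcases Nat.lt_succ_iff_lt_or_eq.1 hj with hj | hj
  · exact h j hj
  · rwa [show j = ⟨n, hn⟩ from Fin.ext hj]

theorem prefixKernel_succ_of_le {n : ℕ} (hn : N ≤ n) :
    prefixKernel C ι (n + 1) = prefixKernel C ι n :=
  filter_congr fun _ _ => ⟨fun h j _ => h j (by omega), fun h j _ => h j (by omega)⟩

theorem prefixKernel_congr {ι' : Fin N → Fin m} {n : ℕ}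
    (h : ∀ j : Fin N, (j : ℕ) < n → ι j = ι' j) :
    prefixKernel C ι n = prefixKernel C ι' n :=
  filter_congr fun _ _ => forall_congr' fun j => imp_congr_right fun hj => by rw [h j hj]

theorem prefixKernel_eq_filter {n : ℕ} (h : n ≤ N) :
    prefixKernel C ι n = {c ∈ C | ∀ j : Fin n, c (ι (Fin.castLE h j)) = 0} :=
  filter_congr fun _ _ => ⟨fun hc j => hc _ j.isLt, fun hc j hj => hc ⟨j, hj⟩⟩

variable {C}

theorem add_mem_prefixKernel (hC : ∀ x ∈ C, ∀ y ∈ C, x + y ∈ C) (n : ℕ) :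
    ∀ x ∈ prefixKernel C ι n, ∀ y ∈ prefixKernel C ι n, x + y ∈ prefixKernel C ι n := by
  simp only [prefixKernel, mem_filter]
  exact fun x hx y hy => ⟨hC x hx.1 y hy.1, fun j hj => by simp [hx.2 j hj, hy.2 j hj]⟩

theorem staysOrHalves_card_prefixKernel (hC : ∀ x ∈ C, ∀ y ∈ C, x + y ∈ C) :
    StaysOrHalves fun n => #(prefixKernel C ι n) := by
  intro n
  dsimp only
  rcases lt_or_ge n N with hn | hn
  · rw [prefixKernel_succ C ι hn]
    exact (filter_eq_self_or_two_mul_card_filter (add_mem_prefixKernel ι hC n) _).imp_left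
      (congrArg card)
  · exact Or.inl (by rw [prefixKernel_succ_of_le C ι hn])

end PrefixKernel

section Sampling

variable {m N d k : ℕ} {C : Finset (Fin m → ZMod 2)}

theorem mul_card_le_card_halving_mul (hC : ∀ x ∈ C, ∀ y ∈ C, x + y ∈ C)
    (hd : ∀ c ∈ C, c ≠ 0 → d ≤ hammingNorm c) {n : ℕ} (hn : n < N) :
    d * #{ι : Fin N → Fin m | 3 ≤ #(prefixKernel C ι n)} ≤
      #{ι : Fin N → Fin m | 3 ≤ #(prefixKernel C ι n) ∧
        #(prefixKernel C ι (n + 1)) < #(prefixKernel C ι n)} * m := by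
  refine (Fintype.card_fin m).subst (motive := fun M => _ ≤ _ * M)
    (mul_card_le_card_mul_of_update ⟨n, hn⟩ fun ι hι => ?_)
  have h3 : 3 ≤ #(prefixKernel C ι n) := (mem_filter.1 hι).2
  obtain ⟨c₀, hc₀, hc₀0⟩ := exists_mem_ne (by omega : 1 < #(prefixKernel C ι n)) 0
  -- resampling the `n`-th coordinate anywhere in the support of `c₀` halves `E_n`
  refine (hd c₀ (filter_subset _ _ hc₀) hc₀0).trans (card_le_card fun v hv => ?_)
  have hsame : prefixKernel C (Function.update ι ⟨n, hn⟩ v) n = prefixKernel C ι n :=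
    prefixKernel_congr C _ fun j hj => Function.update_of_ne (Fin.ne_of_lt hj) _ _
  have halve := two_mul_card_filter_eq_zero (add_mem_prefixKernel _ hC n)
    (Function.update ι ⟨n, hn⟩ v ⟨n, hn⟩) (hsame ▸ hc₀) (by simpa using (mem_filter.1 hv).2)
  rw [← prefixKernel_succ, hsame] at halve
  simp only [mem_filter, mem_univ, true_and, hsame]
  omega

theorem sum_card_halving_le (hC : ∀ x ∈ C, ∀ y ∈ C, x + y ∈ C) (hcard : #C = 2 ^ k) :
    ∑ n ∈ range N, #{ι : Fin N → Fin m | 3 ≤ #(prefixKernel C ι n) ∧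
        #(prefixKernel C ι (n + 1)) < #(prefixKernel C ι n)} ≤ (k - 1) * m ^ N := by
  calc _ = ∑ ι : Fin N → Fin m, #{n ∈ range N | 3 ≤ #(prefixKernel C ι n) ∧
        #(prefixKernel C ι (n + 1)) < #(prefixKernel C ι n)} := by
        simp only [card_filter]
        exact sum_comm
    _ ≤ ∑ _ι : Fin N → Fin m, (k - 1) := sum_le_sum fun ι _ =>
        (staysOrHalves_card_prefixKernel ι hC).card_filter_halving_le
          (by simp [prefixKernel_zero, hcard]) N
    _ = (k - 1) * m ^ N := by simp [mul_comm]

theorem mul_card_three_le (hC : ∀ x ∈ C, ∀ y ∈ C, x + y ∈ C) (hcard : #C = 2 ^ k)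
    (hd : ∀ c ∈ C, c ≠ 0 → d ≤ hammingNorm c) :
    d * N * #{ι : Fin N → Fin m | 3 ≤ #(prefixKernel C ι N)} ≤ m * (k - 1) * m ^ N := by
  calc d * N * #{ι : Fin N → Fin m | 3 ≤ #(prefixKernel C ι N)}
      = ∑ _n ∈ range N, d * #{ι : Fin N → Fin m | 3 ≤ #(prefixKernel C ι N)} := by
        rw [sum_const, card_range, smul_eq_mul]; ring
    _ ≤ ∑ n ∈ range N, d * #{ι : Fin N → Fin m | 3 ≤ #(prefixKernel C ι n)} :=
        sum_le_sum fun n hn => Nat.mul_le_mul_left d <| card_le_card fun ι hι => by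
          simp only [mem_filter, mem_univ, true_and] at hι ⊢
          exact hι.trans ((staysOrHalves_card_prefixKernel ι hC).antitone (mem_range.1 hn).le)
    _ ≤ ∑ n ∈ range N, #{ι : Fin N → Fin m | 3 ≤ #(prefixKernel C ι n) ∧
        #(prefixKernel C ι (n + 1)) < #(prefixKernel C ι n)} * m :=
        sum_le_sum fun n hn => mul_card_le_card_halving_mul hC hd (mem_range.1 hn)
    _ ≤ (k - 1) * m ^ N * m := by
        rw [← sum_mul]; exact Nat.mul_le_mul_right m (sum_card_halving_le hC hcard)
    _ = m * (k - 1) * m ^ N := by ring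

theorem pow_le_two_mul_card_le_two (hC : ∀ x ∈ C, ∀ y ∈ C, x + y ∈ C) (hcard : #C = 2 ^ k)
    (hd : ∀ c ∈ C, c ≠ 0 → d ≤ hammingNorm c) (hN : 2 * m * (k - 1) < d * N) :
    m ^ N ≤ 2 * #{ι : Fin N → Fin m | #(prefixKernel C ι N) ≤ 2} := by
  have hsplit := card_filter_add_card_filter_not (s := (univ : Finset (Fin N → Fin m)))
    (fun ι => 3 ≤ #(prefixKernel C ι N))
  have hlarge := mul_card_three_le (N := N) hC hcard hd
  have hsmall : #{ι : Fin N → Fin m | ¬3 ≤ #(prefixKernel C ι N)} =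
      #{ι : Fin N → Fin m | #(prefixKernel C ι N) ≤ 2} :=
    congrArg card (filter_congr fun _ _ => by omega)
  rw [hsmall, card_univ, Fintype.card_fun, Fintype.card_fin, Fintype.card_fin] at hsplit
  rw [mul_assoc] at hN
  generalize d * N = D at *
  generalize m * (k - 1) = a at *
  nlinarith

theorem card_le_two_le_sum (hk : 1 ≤ k) (hC : ∀ x ∈ C, ∀ y ∈ C, x + y ∈ C)
    (hcard : #C = 2 ^ k) :
    #{ι : Fin N → Fin m | #(prefixKernel C ι N) ≤ 2} ≤
      ∑ n ∈ Icc (k - 1) N, #{ι : Fin N → Fin m | #(prefixKernel C ι n) = 2} := by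
  refine (card_le_card fun ι hι => ?_).trans card_biUnion_le
  obtain ⟨n, hn, h2⟩ := (staysOrHalves_card_prefixKernel ι hC).exists_mem_Icc_eq_two hk
    (by simp [prefixKernel_zero, hcard]) (mem_filter.1 hι).2
  exact mem_biUnion.2 ⟨n, hn, mem_filter.2 ⟨mem_univ _, h2⟩⟩

theorem exists_mem_Icc_pow_le_mul_card_eq_two (hm : 0 < m) (hk : 1 ≤ k)
    (hC : ∀ x ∈ C, ∀ y ∈ C, x + y ∈ C) (hcard : #C = 2 ^ k)
    (hd : ∀ c ∈ C, c ≠ 0 → d ≤ hammingNorm c) (hN : 2 * m * (k - 1) < d * N) :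
    ∃ n ∈ Icc (k - 1) N,
      m ^ N ≤ 2 * #(Icc (k - 1) N) * #{ι : Fin N → Fin m | #(prefixKernel C ι n) = 2} := by
  have hcover := (pow_le_two_mul_card_le_two hC hcard hd hN).trans
    (Nat.mul_le_mul_left 2 (card_le_two_le_sum hk hC hcard))
  have hpos : 0 < m ^ N := pow_pos hm N
  refine exists_le_of_sum_le (nonempty_of_sum_ne_zero
    (f := fun n => #{ι : Fin N → Fin m | #(prefixKernel C ι n) = 2}) (by omega)) ?_
  rw [sum_const, smul_eq_mul, ← mul_sum]
  nlinarith

theorem exists_pow_le_mul_card_eq_two (hk : 1 ≤ k) (hd1 : 1 ≤ d) (hdm : d ≤ m)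
    (hC : ∀ x ∈ C, ∀ y ∈ C, x + y ∈ C) (hcard : #C = 2 ^ k)
    (hd : ∀ c ∈ C, c ≠ 0 → d ≤ hammingNorm c) :
    ∃ n, k - 1 ≤ n ∧ d * n ≤ 2 * m * k ∧
      d * m ^ n ≤ 4 * m * k * #{ι : Fin n → Fin m | #{c ∈ C | ∀ j, c (ι j) = 0} = 2} := by
  set N := 2 * m * (k - 1) / d + 1 with hN
  have hNlow : 2 * m * (k - 1) < d * N := Nat.lt_mul_div_succ _ hd1
  have hNhigh : d * N ≤ 2 * m * (k - 1) + d := by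
    rw [hN, mul_add, mul_one]
    exact Nat.add_le_add_right (Nat.mul_div_le _ _) d
  obtain ⟨n, hn, hpig⟩ :=
    exists_mem_Icc_pow_le_mul_card_eq_two (by omega) hk hC hcard hd hNlow
  obtain ⟨hkn, hnN⟩ := mem_Icc.1 hn
  set cnt := #{ι : Fin n → Fin m | #{c ∈ C | ∀ j, c (ι j) = 0} = 2}
  have htransfer : #{ι : Fin N → Fin m | #(prefixKernel C ι n) = 2} = cnt * m ^ (N - n) := by
    simp_rw [prefixKernel_eq_filter C _ hnN]
    rw [card_filter_comp_castLE hnN (fun ι => #{c ∈ C | ∀ j, c (ι j) = 0} = 2), Fintype.card_fin]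
  rw [htransfer, ← Nat.pow_sub_mul_pow m hnN] at hpig
  have hcount : m ^ n ≤ 2 * #(Icc (k - 1) N) * cnt :=
    Nat.le_of_mul_le_mul_left (by linarith) (pow_pos (by omega : 0 < m) (N - n))
  have hmk : 2 * m * (k - 1) + 2 * m = 2 * m * k := by rw [← mul_add_one, Nat.sub_add_cancel hk]
  have hwindow : d * #(Icc (k - 1) N) ≤ 2 * m * k := by
    have : d * #(Icc (k - 1) N) + d * (k - 1) = d * N + d := by
      rw [← mul_add, Nat.card_Icc, ← mul_add_one]; congr 1; omega
    have : d * 1 ≤ d * (k - 1) + d := by omega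
    nlinarith
  refine ⟨n, hkn, ?_, ?_⟩
  · have := Nat.mul_le_mul_left d hnN
    omega
  · calc d * m ^ n ≤ d * (2 * #(Icc (k - 1) N) * cnt) := Nat.mul_le_mul_left d hcount
      _ = 2 * (d * #(Icc (k - 1) N)) * cnt := by ring
      _ ≤ 2 * (2 * m * k) * cnt := by gcongr
      _ = 4 * m * k * cnt := by ring

end Sampling

theorem stmt_14_general (m k d : ℕ) (hk : 1 ≤ k) (hd1 : 1 ≤ d) (hdm : d ≤ m)
    (C : Finset (Fin m → ZMod 2))
    (hadd : ∀ x ∈ C, ∀ y ∈ C, x + y ∈ C)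
    (hcard : C.card = 2 ^ k)
    (hweight : ∀ c ∈ C, c ≠ 0 →
      d ≤ (Finset.univ.filter (fun i : Fin m => c i ≠ 0)).card) :
    (∃ n : ℕ, k - 1 ≤ n ∧ (n : ℝ) ≤ 2 * m * k / d ∧
      (d : ℝ) / (4 * m * k) ≤
        ((Finset.univ.filter
            (fun ci : {x // x ∈ C} × (Fin n → Fin m) =>
              (C.filter (fun c => ∀ j : Fin n,
                c (ci.2 j) = (ci.1 : Fin m → ZMod 2) (ci.2 j))).card = 2)).card : ℝ) /
          (2 ^ k * m ^ n)) ∧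
    (∀ (n : ℕ) (cstar : Fin m → ZMod 2), cstar ∈ C → ∀ ι : Fin n → Fin m,
      ∀ c₁ ∈ C.filter (fun c => ∀ j : Fin n, c (ι j) = cstar (ι j)),
      ∀ c₂ ∈ C.filter (fun c => ∀ j : Fin n, c (ι j) = cstar (ι j)),
        c₁ ≠ c₂ →
        d ≤ (Finset.univ.filter (fun i : Fin m => c₁ i ≠ c₂ i)).card) := by
  refine ⟨?_, fun n _ _ ι c₁ h₁ c₂ h₂ hne =>
    le_hammingDist_of_mem hadd hweight (mem_filter.1 h₁).1 (mem_filter.1 h₂).1 hne⟩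
  obtain ⟨n, hkn, hdn, hcount⟩ := exists_pow_le_mul_card_eq_two hk hd1 hdm hadd hcard hweight
  have hd : (0 : ℝ) < d := by exact_mod_cast hd1
  have hm : (0 : ℝ) < m := by exact_mod_cast hd1.trans hdm
  refine ⟨n, hkn, ?_, ?_⟩
  · rw [le_div_iff₀ hd]
    exact_mod_cast (mul_comm n d).trans_le hdn
  · rw [card_filter_card_consistent_eq hadd, hcard, div_le_div_iff₀ (by positivity) (by positivity)]
    set cnt := #{ι : Fin n → Fin m | #{c ∈ C | ∀ j, c (ι j) = 0} = 2}
    have hcount' : (d : ℝ) * m ^ n ≤ 4 * m * k * cnt := by exact_mod_cast hcount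
    push_cast
    nlinarith [pow_pos (two_pos : (0 : ℝ) < 2) k]

/-- Lemma 8 (general error-correcting codes). Let `C ⊆ 𝔽₂^m` be a linear code of
dimension `k` and minimum distance `d`. If a uniformly random codeword `C*` is
observed at `n` independent uniform coordinates, then for some
`k - 1 ≤ n ≤ 2mk/d`, with probability at least `d/(4mk)` exactly two codewords
remain consistent with the observations; moreover any two distinct consistent
codewords differ in at least `d` coordinates (a `d/m` fraction). -/
theorem stmt_14 (m k d : ℕ) (hm : 1 ≤ m) (hk : 1 ≤ k) (hd1 : 1 ≤ d) (hdm : d ≤ m)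
    (C : Finset (Fin m → ZMod 2))
    (hzero : (0 : Fin m → ZMod 2) ∈ C)
    (hadd : ∀ x ∈ C, ∀ y ∈ C, x + y ∈ C)
    (hcard : C.card = 2 ^ k)
    (hweight : ∀ c ∈ C, c ≠ 0 →
      d ≤ (Finset.univ.filter (fun i : Fin m => c i ≠ 0)).card) :
    (∃ n : ℕ, k - 1 ≤ n ∧ (n : ℝ) ≤ 2 * m * k / d ∧
      (d : ℝ) / (4 * m * k) ≤
        ((Finset.univ.filter
            (fun ci : {x // x ∈ C} × (Fin n → Fin m) =>
              (C.filter (fun c => ∀ j : Fin n,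
                c (ci.2 j) = (ci.1 : Fin m → ZMod 2) (ci.2 j))).card = 2)).card : ℝ) /
          (2 ^ k * m ^ n)) ∧
    (∀ (n : ℕ) (cstar : Fin m → ZMod 2), cstar ∈ C → ∀ ι : Fin n → Fin m,
      ∀ c₁ ∈ C.filter (fun c => ∀ j : Fin n, c (ι j) = cstar (ι j)),
      ∀ c₂ ∈ C.filter (fun c => ∀ j : Fin n, c (ι j) = cstar (ι j)),
        c₁ ≠ c₂ →
        d ≤ (Finset.univ.filter (fun i : Fin m => c₁ i ≠ c₂ i)).card) :=
  stmt_14_general m k d hk hd1 hdm C hadd hcard hweight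
end
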